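/- (Main theorem, case α = 1.) Consider an HL-flock with random interactions satisfying Condition (K) with p ∈ (0,1] and α = 1. For ℓ = 2,…,k define γ_ℓ = Σ_{j∈L(ℓ)} p/‖v_ℓ[0] − v_j[0]‖ (with the convention 1/0 = ∞). If γ_ℓ > k − ℓ + 2 for every ℓ = 3,…,k and γ_2 > k − 1, then almost surely the flock flocks: ‖v[t]‖∞ → 0 and x[t] converges to a (random) limit in ℝ^{3k} as t → ∞. -/

import Mathlib

open MeasureTheory Finset Filter
open scoped ENNReal NNReal

noncomputable def ppX (c : ℕ → ℝ) (t : ℕ) : ℝ := ∏ r ∈ Finset.range t, (1 - c r)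


namespace FlockAux

/-- `(1+x)^n (1 - n x) ≤ 1` for `x ≥ 0`. -/
lemma bern (x : ℝ) (hx : 0 ≤ x) : ∀ n : ℕ, (1 + x) ^ n * (1 - n * x) ≤ 1 := by
  intro n
  induction n with
  | zero => simp
  | succ n ih =>
    have h1x : (0:ℝ) ≤ 1 + x := by linarith
    have key : (1 + x) * (1 - (n+1 : ℕ) * x) ≤ 1 - n * x := by
      push_cast; nlinarith [sq_nonneg x]
    calc (1+x)^(n+1) * (1 - (n+1:ℕ)*x) = (1+x)^n * ((1+x) * (1 - (n+1:ℕ)*x)) := by ring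
      _ ≤ (1+x)^n * (1 - n*x) := by
          apply mul_le_mul_of_nonneg_left key (pow_nonneg h1x n)
      _ ≤ 1 := ih

section Pi

variable (c : ℕ → ℝ)

lemma pp_succ (t : ℕ) : ppX c (t+1) = (1 - c t) * ppX c t := by
  rw [ppX, ppX, Finset.prod_range_succ, mul_comm]

lemma pp_pos (hc1 : ∀ t, c t < 1) (t : ℕ) : 0 < ppX c t :=
  Finset.prod_pos (fun r _ => by linarith [hc1 r])

lemma pp_le_one (hc0 : ∀ t, 0 ≤ c t) (hc1 : ∀ t, c t < 1) (t : ℕ) : ppX c t ≤ 1 :=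
  Finset.prod_le_one (fun r _ => by linarith [hc1 r]) (fun r _ => by linarith [hc0 r])

lemma pp_antitone (hc0 : ∀ t, 0 ≤ c t) (hc1 : ∀ t, c t < 1) : Antitone (ppX c) := by
  apply antitone_nat_of_succ_le
  intro t
  rw [pp_succ]
  nlinarith [pp_pos c hc1 t, hc0 t, hc1 t]

/-- lower bound : `π t ≥ (1+t)^{-κ}` when `c t ≤ κ/(κ+t+1)`. -/
lemma pp_lower (κ : ℕ) (hc0 : ∀ t, 0 ≤ c t) (hc1 : ∀ t, c t < 1)
    (hcap : ∀ t, c t ≤ (κ:ℝ)/(κ+t+1)) :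
    ∀ t, 1 ≤ ppX c t * ((1:ℝ)+t)^κ := by
  intro t
  induction t with
  | zero => simp [ppX]
  | succ t ih =>
    have hp := pp_pos c hc1 t
    have h2 : (0:ℝ) < (κ:ℝ)+t+1 := by positivity
    have hstep : ((t:ℝ)+1)/((κ:ℝ)+t+1) ≤ 1 - c t := by
      have := hcap t
      rw [div_le_iff₀ h2]
      have : c t * ((κ:ℝ)+t+1) ≤ κ := by
        rw [← div_mul_cancel₀ (κ:ℝ) (ne_of_gt h2)] at *
        exact mul_le_mul_of_nonneg_right this (le_of_lt h2) |>.trans (by rw [div_mul_cancel₀ _ (ne_of_gt h2)])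
      nlinarith
    -- Bernoulli : (1 + 1/(t+1))^κ ≥ 1 + κ/(t+1)
    have ht1 : (0:ℝ) < (t:ℝ)+1 := by positivity
    have hxpos : (0:ℝ) ≤ 1/((t:ℝ)+1) := by positivity
    have hbern : 1 + (κ:ℝ) * (1/((t:ℝ)+1)) ≤ (1 + 1/((t:ℝ)+1))^κ :=
      one_add_mul_le_pow (by linarith : (-2:ℝ) ≤ 1/((t:ℝ)+1)) κ
    -- goal : 1 ≤ ppX c (t+1) * (1 + (t+1))^κ
    have hkey : ((κ:ℝ)+t+1)/((t:ℝ)+1) ≤ (((t:ℝ)+2)/((t:ℝ)+1))^κ := by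
      have : (1 + 1/((t:ℝ)+1)) = ((t:ℝ)+2)/((t:ℝ)+1) := by field_simp; ring
      rw [← this]
      calc ((κ:ℝ)+t+1)/((t:ℝ)+1) = 1 + (κ:ℝ) * (1/((t:ℝ)+1)) := by field_simp; ring
        _ ≤ _ := hbern
    rw [pp_succ]
    have e1 : ((1:ℝ) + (t+1:ℕ)) = (t:ℝ)+2 := by push_cast; ring
    rw [e1]
    have h3 : (0:ℝ) < ((t:ℝ)+2)^κ := by positivity
    have h4 : (0:ℝ) < ((t:ℝ)+1)^κ := by positivity
    -- from hkey : (κ+t+1) * (t+1)^κ ≤ (t+1) * (t+2)^κ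
    have hkey2 : ((κ:ℝ)+t+1) * ((t:ℝ)+1)^κ ≤ ((t:ℝ)+1) * ((t:ℝ)+2)^κ := by
      have := mul_le_mul_of_nonneg_right hkey (le_of_lt h4)
      rw [div_mul_eq_mul_div, div_pow, div_mul_eq_mul_div] at this
      rw [div_le_div_iff₀ ht1 (by positivity)] at this
      nlinarith [this]
    have ih' : ((1:ℝ)+t)^κ * ppX c t ≥ 1 := by rw [mul_comm]; exact ih
    have e2 : ((1:ℝ)+t) = (t:ℝ)+1 := by ring
    rw [e2] at ih'
    calc (1:ℝ) ≤ (((t:ℝ)+1)/((κ:ℝ)+t+1)) * (((κ:ℝ)+t+1)/((t:ℝ)+1)) * (((t:ℝ)+1)^κ * ppX c t) := by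
          rw [div_mul_div_comm, mul_comm ((t:ℝ)+1)]
          rw [div_self (by positivity)]
          simpa using ih'
      _ ≤ (1 - c t) * ((((t:ℝ)+2)/((t:ℝ)+1))^κ) * (((t:ℝ)+1)^κ * ppX c t) := by
          apply mul_le_mul_of_nonneg_right _ (by positivity)
          exact mul_le_mul hstep hkey (by positivity) (by linarith [hc1 t])
      _ = (1 - c t) * ppX c t * (((t:ℝ)+2)^κ / ((t:ℝ)+1)^κ * ((t:ℝ)+1)^κ) := by
          rw [div_pow]; ring
      _ = (1 - c t) * ppX c t * ((t:ℝ)+2)^κ := by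
          rw [div_mul_cancel₀ _ (ne_of_gt h4)]

end Pi

end FlockAux


namespace FlockAux


/-- `π t ≤ 1/(1 + ∑_{s<t} c s)`. -/
lemma pp_le_inv_sum (c : ℕ → ℝ) (hc0 : ∀ t, 0 ≤ c t) (hc1 : ∀ t, c t < 1) (t : ℕ) :
    ppX c t ≤ 1 / (1 + ∑ s ∈ Finset.range t, c s) := by
  induction t with
  | zero => simp [ppX]
  | succ t ih =>
    have hS : (0:ℝ) ≤ ∑ s ∈ Finset.range t, c s := Finset.sum_nonneg fun s _ => hc0 s
    have h1 : (0:ℝ) < 1 + ∑ s ∈ Finset.range t, c s := by linarith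
    have h2 : (0:ℝ) < 1 + ∑ s ∈ Finset.range (t+1), c s := by
      rw [Finset.sum_range_succ]; linarith [hc0 t]
    have hpp : ppX c (t+1) = (1 - c t) * ppX c t := by
      rw [ppX, ppX, Finset.prod_range_succ, mul_comm]
    rw [hpp]
    have hct : 0 ≤ 1 - c t := by linarith [hc1 t]
    calc (1 - c t) * ppX c t ≤ (1 - c t) * (1 / (1 + ∑ s ∈ Finset.range t, c s)) :=
          mul_le_mul_of_nonneg_left ih hct
      _ ≤ 1 / (1 + ∑ s ∈ Finset.range (t+1), c s) := by
          rw [Finset.sum_range_succ, mul_one_div, div_le_div_iff₀ h1 (by linarith [hc0 t])]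
          nlinarith [hc0 t, mul_nonneg (hc0 t) hS]

lemma pp_tendsto_zero (c : ℕ → ℝ) (A : ℝ) (hA : 0 < A)
    (hc0 : ∀ t, 0 ≤ c t) (hc1 : ∀ t, c t < 1)
    (hlow : ∀ t, A / (1 + t) ≤ c t) :
    Filter.Tendsto (ppX c) Filter.atTop (nhds 0) := by
  have hharm : Filter.Tendsto (fun t => ∑ s ∈ Finset.range t, A * (1/((s:ℝ)+1)))
      Filter.atTop Filter.atTop := by
    simp only [← Finset.mul_sum]
    exact (Real.tendsto_sum_range_one_div_nat_succ_atTop.const_mul_atTop hA)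
  have hmono : ∀ t, ∑ s ∈ Finset.range t, A * (1/((s:ℝ)+1)) ≤ ∑ s ∈ Finset.range t, c s := by
    intro t
    apply Finset.sum_le_sum
    intro s _
    rw [mul_one_div]
    calc A/((s:ℝ)+1) = A/(1+(s:ℝ)) := by rw [add_comm]
      _ ≤ c s := hlow s
  have hsum : Filter.Tendsto (fun t => ∑ s ∈ Finset.range t, c s) Filter.atTop Filter.atTop :=
    Filter.tendsto_atTop_mono hmono hharm
  have h1 : Filter.Tendsto (fun t => 1 + ∑ s ∈ Finset.range t, c s) Filter.atTop Filter.atTop :=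
    Filter.tendsto_atTop_add_const_left _ 1 hsum
  have h2 : Filter.Tendsto (fun t => 1 / (1 + ∑ s ∈ Finset.range t, c s)) Filter.atTop (nhds 0) :=
    Filter.Tendsto.div_atTop tendsto_const_nhds h1
  have hpos : ∀ t, 0 ≤ ppX c t := fun t =>
    le_of_lt (Finset.prod_pos fun r _ => by linarith [hc1 r])
  exact squeeze_zero hpos (pp_le_inv_sum c hc0 hc1) h2

/-- upper bound in the capped regime: for `t ≥ t₁`,
`π t ≤ (t₁+κ+1)^κ / (t+κ+1)^κ`. -/
lemma pp_upper (c : ℕ → ℝ) (κ t₁ : ℕ)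
    (hc0 : ∀ t, 0 ≤ c t) (hc1 : ∀ t, c t < 1)
    (hlow : ∀ s, t₁ ≤ s → (κ:ℝ)/(κ+s+1) ≤ c s) :
    ∀ t, t₁ ≤ t → ppX c t ≤ ((t₁:ℝ)+κ+1)^κ / ((t:ℝ)+κ+1)^κ := by
  intro t ht
  induction t, ht using Nat.le_induction with
  | base =>
    rw [div_self (by positivity)]
    exact Finset.prod_le_one (fun r _ => by linarith [hc1 r]) (fun r _ => by linarith [hc0 r])
  | succ t ht ih =>
    have hpp : ppX c (t+1) = (1 - c t) * ppX c t := by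
      rw [ppX, ppX, Finset.prod_range_succ, mul_comm]
    have hppnn : 0 ≤ ppX c t := le_of_lt (Finset.prod_pos fun r _ => by linarith [hc1 r])
    have hT : (0:ℝ) < (t:ℝ)+κ+1 := by positivity
    have h3 : (κ:ℝ) ≤ c t * ((κ:ℝ)+t+1) := by
      have := hlow t ht
      rwa [div_le_iff₀ (by positivity : (0:ℝ) < (κ:ℝ)+t+1)] at this
    have hct : 1 - c t ≤ ((t:ℝ)+1)/((t:ℝ)+κ+1) := by
      rw [le_div_iff₀ hT]; nlinarith
    have hx : (0:ℝ) ≤ 1/((t:ℝ)+κ+1) := by positivity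
    have hb1 := bern _ hx κ
    have e1 : (1 + 1/((t:ℝ)+κ+1)) = ((t:ℝ)+κ+2)/((t:ℝ)+κ+1) := by field_simp; ring
    have e2 : (1 - (κ:ℝ)*(1/((t:ℝ)+κ+1))) = ((t:ℝ)+1)/((t:ℝ)+κ+1) := by field_simp; ring
    rw [e1, e2, div_pow] at hb1
    have hb : ((t:ℝ)+1) * ((t:ℝ)+κ+2)^κ ≤ ((t:ℝ)+κ+1)^(κ+1) := by
      rw [div_mul_div_comm, div_le_one (by positivity)] at hb1
      calc ((t:ℝ)+1) * ((t:ℝ)+κ+2)^κ = ((t:ℝ)+κ+2)^κ * ((t:ℝ)+1) := by ring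
        _ ≤ ((t:ℝ)+κ+1)^κ * ((t:ℝ)+κ+1) := hb1
        _ = ((t:ℝ)+κ+1)^(κ+1) := by rw [pow_succ]
    have hBnn : (0:ℝ) ≤ ((t₁:ℝ)+κ+1)^κ := by positivity
    have hcast : (((t+1:ℕ)):ℝ)+κ+1 = (t:ℝ)+κ+2 := by push_cast; ring
    rw [hpp, hcast]
    have hctnn : (0:ℝ) ≤ 1 - c t := by linarith [hc1 t]
    calc (1 - c t) * ppX c t ≤ (((t:ℝ)+1)/((t:ℝ)+κ+1)) * (((t₁:ℝ)+κ+1)^κ / ((t:ℝ)+κ+1)^κ) :=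
          mul_le_mul hct ih hppnn (by positivity)
      _ = ((t₁:ℝ)+κ+1)^κ * (((t:ℝ)+1) / ((t:ℝ)+κ+1)^(κ+1)) := by
          rw [pow_succ]; field_simp
      _ ≤ ((t₁:ℝ)+κ+1)^κ / ((t:ℝ)+κ+2)^κ := by
          rw [div_eq_mul_one_div ((((t₁:ℝ)+κ+1))^κ) (((t:ℝ)+κ+2)^κ)]
          apply mul_le_mul_of_nonneg_left _ hBnn
          rw [div_le_div_iff₀ (by positivity) (by positivity)]
          calc ((t:ℝ)+1) * ((t:ℝ)+κ+2)^κ ≤ ((t:ℝ)+κ+1)^(κ+1) := hb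
            _ = 1 * ((t:ℝ)+κ+1)^(κ+1) := by ring

end FlockAux



namespace FlockCore

variable {Ω : Type*} {m0 : MeasurableSpace Ω} {μ : Measure Ω} [IsProbabilityMeasure μ]

lemma core (ℱ : Filtration ℕ m0)
    (u W I : ℕ → Ω → ℝ) (α : ℕ → Ω → ℝ)
    (c w : ℕ → ℝ) (m : ℝ)
    (hu_meas : ∀ t, Measurable[ℱ t] (u t))
    (hu0 : ∀ t ω, 0 ≤ u t ω) (hum : ∀ t ω, u t ω ≤ m)
    (hα_meas : ∀ t, Measurable[ℱ (t+1)] (α (t+1)))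
    (hα0 : ∀ t ω, 0 ≤ α (t+1) ω) (hα1 : ∀ t ω, α (t+1) ω ≤ 1)
    (hW0 : ∀ t ω, 0 ≤ W t ω)
    (hI_meas : ∀ t, Measurable[ℱ t] (I t))
    (hI01 : ∀ t ω, I t ω = 0 ∨ I t ω = 1)
    (hImono : ∀ t ω, I (t+1) ω ≤ I t ω)
    (hIW : ∀ t ω, I t ω = 1 → W t ω ≤ w t)
    (hw0 : ∀ t, 0 ≤ w t)
    (hrec : ∀ t ω, u (t+1) ω ≤ (1 - α (t+1) ω) * u t ω + W t ω)
    (hc0 : ∀ t, 0 ≤ c t) (hc1 : ∀ t, c t < 1)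
    (hsum : Summable (fun s => w s / ppX c (s+1)))
    (hcond : ∀ t, ∀ᵐ ω ∂μ, I t ω = 1 → c t ≤ (μ[α (t+1) | ℱ t]) ω) :
    ∀ᵐ ω ∂μ, (∀ t, I t ω = 1) → ∃ C : ℝ, ∀ t, u t ω ≤ C * ppX c t := by
  classical
  set π := ppX c with hπdef
  have hπpos : ∀ t, 0 < π t := fun t => Finset.prod_pos fun r _ => by linarith [hc1 r]
  have hπsucc : ∀ t, π (t+1) = (1 - c t) * π t := by
    intro t; rw [hπdef]; rw [ppX, ppX, Finset.prod_range_succ, mul_comm]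
  set f : ℕ → ℝ := fun s => w s / π (s+1) with hfdef
  have hf0 : ∀ s, 0 ≤ f s := fun s => div_nonneg (hw0 s) (hπpos _).le
  have hshift : ∀ t, Summable (fun s => f (t + s)) := by
    intro t
    have h1 : Summable (fun s => f (s + t)) := (summable_nat_add_iff (f := f) t).2 hsum
    simpa [add_comm] using h1
  set ρ : ℕ → ℝ := fun t => ∑' s, f (t + s) with hρdef
  have hρ0 : ∀ t, 0 ≤ ρ t := fun t => tsum_nonneg fun s => hf0 _
  have hρrec : ∀ t, ρ t = f t + ρ (t+1) := by
    intro t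
    have h0 := Summable.tsum_eq_zero_add (hshift t)
    show (∑' s, f (t+s)) = f t + ρ (t+1)
    rw [h0, Nat.add_zero]
    congr 1
    exact tsum_congr fun s => by congr 1; omega
  have hρle : ∀ t, ρ t ≤ ρ 0 := by
    intro t
    induction t with
    | zero => exact le_refl _
    | succ t ih => rw [hρrec t] at ih; linarith [hf0 t]
  set Z : ℕ → Ω → ℝ := fun t ω => I t ω * (u t ω / π t + ρ t) with hZdef
  have hI0 : ∀ t ω, 0 ≤ I t ω := fun t ω => by rcases hI01 t ω with h|h <;> rw [h] <;> norm_num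
  have hI1 : ∀ t ω, I t ω ≤ 1 := fun t ω => by rcases hI01 t ω with h|h <;> rw [h] <;> norm_num
  have hZ0 : ∀ t ω, 0 ≤ Z t ω := fun t ω =>
    mul_nonneg (hI0 t ω) (add_nonneg (div_nonneg (hu0 t ω) (hπpos t).le) (hρ0 t))
  have hZbd : ∀ t ω, Z t ω ≤ m / π t + ρ 0 := by
    intro t ω
    have h1 : Z t ω ≤ 1 * (u t ω / π t + ρ t) :=
      mul_le_mul_of_nonneg_right (hI1 t ω)
        (add_nonneg (div_nonneg (hu0 t ω) (hπpos t).le) (hρ0 t))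
    rw [one_mul] at h1
    have h2 : u t ω / π t ≤ m / π t := (div_le_div_iff_of_pos_right (hπpos t)).2 (hum t ω)
    linarith [hρle t]
  have hZmeas : ∀ t, Measurable[ℱ t] (Z t) := fun t =>
    (hI_meas t).mul (((hu_meas t).div_const _).add_const _)
  have hZint : ∀ t, Integrable (Z t) μ := by
    intro t
    refine ⟨((hZmeas t).mono (ℱ.le t) le_rfl).aestronglyMeasurable, ?_⟩
    apply HasFiniteIntegral.of_bounded (C := m / π t + ρ 0)
    exact ae_of_all _ fun ω => by
      rw [Real.norm_eq_abs, abs_of_nonneg (hZ0 t ω)]; exact hZbd t ω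
  set P : ℕ → Ω → ℝ := fun t ω => I t ω * ((u t ω + w t) / π (t+1) + ρ (t+1)) with hPdef
  set Q : ℕ → Ω → ℝ := fun t ω => I t ω * u t ω / π (t+1) with hQdef
  have hQ0 : ∀ t ω, 0 ≤ Q t ω := fun t ω =>
    div_nonneg (mul_nonneg (hI0 t ω) (hu0 t ω)) (hπpos _).le
  have hα0' : ∀ t ω, 0 ≤ 1 - α (t+1) ω := fun t ω => by linarith [hα1 t ω]
  have hpath : ∀ t ω, Z (t+1) ω ≤ P t ω - Q t ω * α (t+1) ω := by
    intro t ω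
    have hkey : P t ω - Q t ω * α (t+1) ω
        = I t ω * (((1 - α (t+1) ω) * u t ω + w t) / π (t+1) + ρ (t+1)) := by
      rw [hPdef, hQdef]; ring
    rcases hI01 (t+1) ω with h0|h1
    · rw [hZdef]
      simp only [h0, zero_mul]
      rw [hkey]
      apply mul_nonneg (hI0 t ω)
      apply add_nonneg _ (hρ0 _)
      apply div_nonneg _ (hπpos _).le
      exact add_nonneg (mul_nonneg (hα0' t ω) (hu0 t ω)) (hw0 t)
    · have hIt : I t ω = 1 := by
        rcases hI01 t ω with h|h
        · exfalso; have := hImono t ω; rw [h1, h] at this; linarith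
        · exact h
      rw [hZdef]
      simp only [h1, one_mul]
      rw [hkey, hIt, one_mul]
      have hW : W t ω ≤ w t := hIW t ω hIt
      have hu1 : u (t+1) ω ≤ (1 - α (t+1) ω) * u t ω + w t := (hrec t ω).trans (by linarith)
      have hd : u (t+1) ω / π (t+1) ≤ ((1 - α (t+1) ω) * u t ω + w t) / π (t+1) :=
        (div_le_div_iff_of_pos_right (hπpos (t+1))).2 hu1
      linarith [hρ0 (t+1)]
  -- integrability and measurability of the auxiliary processes
  have hPmeas : ∀ t, Measurable[ℱ t] (P t) := fun t =>
    (hI_meas t).mul (((((hu_meas t).add_const _)).div_const _).add_const _)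
  have hQmeas : ∀ t, Measurable[ℱ t] (Q t) := fun t =>
    ((hI_meas t).mul (hu_meas t)).div_const _
  have hPbd : ∀ t ω, |P t ω| ≤ (m + w t) / π (t+1) + ρ 0 := by
    intro t ω
    have h0 : 0 ≤ P t ω := by
      apply mul_nonneg (hI0 t ω)
      exact add_nonneg (div_nonneg (add_nonneg (hu0 t ω) (hw0 t)) (hπpos _).le) (hρ0 _)
    rw [abs_of_nonneg h0]
    have h1 : P t ω ≤ 1 * ((u t ω + w t) / π (t+1) + ρ (t+1)) :=
      mul_le_mul_of_nonneg_right (hI1 t ω)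
        (add_nonneg (div_nonneg (add_nonneg (hu0 t ω) (hw0 t)) (hπpos _).le) (hρ0 _))
    rw [one_mul] at h1
    have h2 : (u t ω + w t) / π (t+1) ≤ (m + w t) / π (t+1) :=
      (div_le_div_iff_of_pos_right (hπpos (t+1))).2 (by linarith [hum t ω])
    linarith [hρle (t+1)]
  have hQbd : ∀ t ω, |Q t ω| ≤ m / π (t+1) := by
    intro t ω
    rw [abs_of_nonneg (hQ0 t ω)]
    have : I t ω * u t ω ≤ m := by
      calc I t ω * u t ω ≤ 1 * u t ω :=
            mul_le_mul_of_nonneg_right (hI1 t ω) (hu0 t ω)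
        _ = u t ω := one_mul _
        _ ≤ m := hum t ω
    exact (div_le_div_iff_of_pos_right (hπpos (t+1))).2 this
  have hm0 : 0 ≤ m := (hu0 0 (Classical.choice (by
      have : μ Set.univ = 1 := measure_univ
      by_contra hne
      rw [not_nonempty_iff] at hne
      rw [Set.univ_eq_empty_iff.2 hne, measure_empty] at this
      norm_num at this))).trans (hum 0 _)
  have hint_of_bd : ∀ (g : Ω → ℝ) (C : ℝ), Measurable g → (∀ ω, |g ω| ≤ C) → Integrable g μ := by
    intro g C hg hb
    exact ⟨hg.aestronglyMeasurable, HasFiniteIntegral.of_bounded (C := C) (ae_of_all _ hb)⟩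
  have hPint : ∀ t, Integrable (P t) μ := fun t =>
    hint_of_bd _ _ ((hPmeas t).mono (ℱ.le t) le_rfl) (hPbd t)
  have hQint : ∀ t, Integrable (Q t) μ := fun t =>
    hint_of_bd _ _ ((hQmeas t).mono (ℱ.le t) le_rfl) (hQbd t)
  have hαint : ∀ t, Integrable (α (t+1)) μ := fun t =>
    hint_of_bd _ 1 ((hα_meas t).mono (ℱ.le (t+1)) le_rfl)
      (fun ω => abs_le.2 ⟨by linarith [hα0 t ω], hα1 t ω⟩)
  have hQαint : ∀ t, Integrable (Q t * α (t+1)) μ := by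
    intro t
    apply hint_of_bd _ (m / π (t+1)) (((hQmeas t).mono (ℱ.le t) le_rfl).mul
      ((hα_meas t).mono (ℱ.le (t+1)) le_rfl))
    intro ω
    show |Q t ω * α (t+1) ω| ≤ m / π (t+1)
    rw [abs_mul]
    calc |Q t ω| * |α (t+1) ω| ≤ (m / π (t+1)) * 1 := by
          apply mul_le_mul (hQbd t ω) _ (abs_nonneg _) (div_nonneg hm0 (hπpos _).le)
          rw [abs_of_nonneg (hα0 t ω)]; exact hα1 t ω
      _ = m / π (t+1) := mul_one _
  have hPQαint : ∀ t, Integrable (P t - Q t * α (t+1)) μ := fun t =>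
    (hPint t).sub (hQαint t)
  -- one-step supermartingale inequality
  have hstep : ∀ t, μ[Z (t+1) | ℱ t] ≤ᵐ[μ] Z t := by
    intro t
    have h1 : μ[Z (t+1) | ℱ t] ≤ᵐ[μ] μ[P t - Q t * α (t+1) | ℱ t] := by
      apply condExp_mono (hZint (t+1)) (hPQαint t)
      exact ae_of_all _ fun ω => by
        have := hpath t ω
        simpa [Pi.sub_apply, Pi.mul_apply] using this
    have h2 : μ[P t - Q t * α (t+1) | ℱ t]
        =ᵐ[μ] P t - Q t * μ[α (t+1) | ℱ t] := by
      have hs := condExp_sub (m := ℱ t) (μ := μ) (hPint t) (hQαint t)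
      have hp : μ[P t | ℱ t] = P t :=
        condExp_of_stronglyMeasurable (ℱ.le t) (hPmeas t).stronglyMeasurable (hPint t)
      have hqα : μ[Q t * α (t+1) | ℱ t] =ᵐ[μ] Q t * μ[α (t+1) | ℱ t] :=
        condExp_mul_of_stronglyMeasurable_left (hQmeas t).stronglyMeasurable (hQαint t) (hαint t)
      calc μ[P t - Q t * α (t+1) | ℱ t]
          =ᵐ[μ] μ[P t | ℱ t] - μ[Q t * α (t+1) | ℱ t] := hs
        _ =ᵐ[μ] P t - Q t * μ[α (t+1) | ℱ t] := by
            rw [hp]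
            exact EventuallyEq.sub (EventuallyEq.refl _ _) hqα
    have h3 : (P t - Q t * μ[α (t+1) | ℱ t] : Ω → ℝ) ≤ᵐ[μ] Z t := by
      filter_upwards [hcond t] with ω hω
      rw [Pi.sub_apply, Pi.mul_apply]
      rcases hI01 t ω with h|h
      · have hP0 : P t ω = 0 := by rw [hPdef]; simp [h]
        have hQ0' : Q t ω = 0 := by rw [hQdef]; simp [h]
        have hZ0' : Z t ω = 0 := by rw [hZdef]; simp [h]
        rw [hP0, hQ0', hZ0']; norm_num
      · have hc := hω h
        have hmul : Q t ω * c t ≤ Q t ω * (μ[α (t+1) | ℱ t]) ω :=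
          mul_le_mul_of_nonneg_left hc (hQ0 t ω)
        have hcne : (1:ℝ) - c t ≠ 0 := by linarith [hc1 t]
        have hid : P t ω - Q t ω * c t = Z t ω := by
          rw [hPdef, hQdef, hZdef]
          simp only [h, one_mul, one_mul]
          have e1 : u t ω / π t = (1 - c t) * u t ω / π (t+1) := by
            rw [hπsucc t, mul_comm (1 - c t) (π t), mul_comm (1 - c t) (u t ω),
              mul_div_mul_right _ _ hcne]
          have e2 : ρ t = w t / π (t+1) + ρ (t+1) := hρrec t
          rw [e1, e2]; ring
        linarith
    exact h1.trans (h2.trans_le h3)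
  have hadp : StronglyAdapted ℱ Z := fun t => (hZmeas t).stronglyMeasurable
  have hsuper : Supermartingale Z ℱ μ := supermartingale_nat hadp hZint hstep
  -- uniform L¹ bound
  have hL1 : ∀ t, eLpNorm (Z t) 1 μ ≤ ENNReal.ofReal (∫ ω, Z 0 ω ∂μ) := by
    intro t
    have hmono : ∫ ω, Z t ω ∂μ ≤ ∫ ω, Z 0 ω ∂μ := by
      have := hsuper.setIntegral_le (Nat.zero_le t)
        (MeasurableSet.univ : MeasurableSet[ℱ 0] Set.univ)
      simpa [setIntegral_univ] using this
    calc eLpNorm (Z t) 1 μ = ∫⁻ ω, ENNReal.ofReal (Z t ω) ∂μ := by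
          rw [eLpNorm_one_eq_lintegral_enorm]
          exact lintegral_congr fun ω => Real.enorm_eq_ofReal (hZ0 t ω)
      _ = ENNReal.ofReal (∫ ω, Z t ω ∂μ) :=
          (ofReal_integral_eq_lintegral_ofReal (hZint t) (ae_of_all _ (hZ0 t))).symm
      _ ≤ _ := ENNReal.ofReal_le_ofReal hmono
  have hL1' : ∀ t, eLpNorm ((-Z) t) 1 μ ≤ (∫ ω, Z 0 ω ∂μ).toNNReal := by
    intro t
    have : (-Z) t = -(Z t) := rfl
    rw [this, eLpNorm_neg]
    calc eLpNorm (Z t) 1 μ ≤ ENNReal.ofReal (∫ ω, Z 0 ω ∂μ) := hL1 t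
      _ = ((∫ ω, Z 0 ω ∂μ).toNNReal : ℝ≥0∞) := rfl
  have hconv := hsuper.neg.ae_tendsto_limitProcess hL1'
  filter_upwards [hconv] with ω hω hI
  have htend : Tendsto (fun n => Z n ω) atTop (nhds (-(ℱ.limitProcess (-Z) μ ω))) := by
    have := hω.neg
    simpa using this
  obtain ⟨C, hC⟩ := htend.bddAbove_range
  refine ⟨C, fun t => ?_⟩
  have hZt : Z t ω ≤ C := hC (Set.mem_range_self t)
  have hlow : u t ω / π t ≤ Z t ω := by
    rw [hZdef]
    simp only [hI t, one_mul]
    linarith [hρ0 t]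
  have := hlow.trans hZt
  calc u t ω = (u t ω / π t) * π t := (div_mul_cancel₀ _ (ne_of_gt (hπpos t))).symm
    _ ≤ C * π t := mul_le_mul_of_nonneg_right this (hπpos t).le

end FlockCore

namespace FlockAux

lemma sum_inv_sq_le : ∀ t : ℕ, ∑ s ∈ Finset.range t, 1/((1:ℝ)+s)^2 ≤ 2 := by
  have key : ∀ t : ℕ, ∑ s ∈ Finset.range t, 1/((1:ℝ)+s)^2 ≤ 2 - 2/(1+(t:ℝ)) := by
    intro t; induction t with
    | zero => norm_num
    | succ t ih =>
      rw [Finset.sum_range_succ]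
      have h1 : (0:ℝ) < 1 + t := by positivity
      have h2 : (0:ℝ) < 2 + t := by positivity
      have hx : 1/((1:ℝ)+t)^2 ≤ 2/(1+(t:ℝ)) - 2/(2+(t:ℝ)) := by
        rw [div_sub_div _ _ (ne_of_gt h1) (ne_of_gt h2), div_le_div_iff₀ (by positivity) (by positivity)]
        nlinarith [sq_nonneg ((t:ℝ)+1)]
      push_cast
      push_cast at ih
      rw [show (1:ℝ)+((t:ℝ)+1) = 2+(t:ℝ) from by ring]
      linarith
  intro t
  have h0 : (0:ℝ) < 2/(1+(t:ℝ)) := by positivity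
  linarith [key t]

lemma summable_inv_sq : Summable (fun s : ℕ => 1/((1:ℝ)+s)^2) := by
  have h := (Real.summable_one_div_nat_pow (p := 2)).2 (by norm_num)
  have h2 := (summable_nat_add_iff 1).2 h
  refine h2.congr fun s => ?_
  push_cast
  ring

end FlockAux
def κfun (k ι : ℕ) : ℕ := 2*(k - ι) + 1

set_option maxHeartbeats 2000000

/-- Main theorem, case `α = 1`: an HL-flock with random interactions satisfying
Condition (K) with `p ∈ (0,1]` and `α = 1`, such that the coefficients
`γ_ℓ = Σ_{j∈L(ℓ)} p/‖v_ℓ[0] − v_j[0]‖` (with `1/0 = ∞`, computed in `ℝ≥0∞`) satisfy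
`γ_ℓ > k − ℓ + 2` for `ℓ = 3,…,k` and `γ_2 > k − 1` (birds being labelled `1,…,k`,
i.e. zero-based indices `ℓ.val = ℓ − 1`), almost surely flocks. -/
theorem flocking_alpha_eq_one
    (k : ℕ) (hk : 2 ≤ k)
    (Ω : Type*) [m0 : MeasurableSpace Ω]
    (μ : Measure Ω) [IsProbabilityMeasure μ]
    (F : ℕ → MeasurableSpace Ω)
    (hFle : ∀ t, F t ≤ m0) (hFmono : Monotone F)
    (x v : ℕ → Ω → Fin k → EuclideanSpace ℝ (Fin 3))
    (L : Fin k → Finset (Fin k))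
    (a : ℕ → Ω → Fin k → Fin k → ℝ)
    (h : ℝ) (hh0 : 0 < h) (hh1 : h ≤ 1 / ((k : ℝ) - 1))
    (hLlt : ∀ i : Fin k, ∀ j ∈ L i, j < i)
    (hLne : ∀ i : Fin k, 0 < i.val → (L i).Nonempty)
    (ha0 : ∀ t ω, ∀ i : Fin k, ∀ j ∈ L i, 0 ≤ a t ω i j)
    (ha1 : ∀ t ω, ∀ i : Fin k, ∀ j ∈ L i, a t ω i j ≤ 1)
    (hxmeas : ∀ t, Measurable[F t] (x t))
    (hvmeas : ∀ t, Measurable[F t] (v t))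
    (hameas : ∀ t, ∀ i : Fin k, ∀ j ∈ L i, Measurable[F t] (fun ω => a t ω i j))
    (hxdyn : ∀ t ω i, x (t + 1) ω i = x t ω i + h • v t ω i)
    (hvdyn : ∀ t ω i, v (t + 1) ω i =
      v t ω i + h • ∑ j ∈ L i, a (t + 1) ω i j • (v t ω j - v t ω i))
    (X0 V0 : Fin k → EuclideanSpace ℝ (Fin 3))
    (hX0 : ∀ ω, x 0 ω = X0) (hV0 : ∀ ω, v 0 ω = V0)
    (hX0z : X0 ⟨0, by omega⟩ = 0) (hV0z : V0 ⟨0, by omega⟩ = 0)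
    (p : ℝ) (hp0 : 0 < p) (hp1 : p ≤ 1)
    (hK : ∀ t : ℕ, ∀ i : Fin k, ∀ j ∈ L i,
      ∀ᵐ ω ∂μ, p / (1 + ‖x t ω i - x t ω j‖) ≤
        (μ[fun ω' => a (t + 1) ω' i j | F t]) ω)
    (γ : Fin k → ENNReal)
    (hγdef : ∀ ℓ : Fin k, γ ℓ =
      ∑ j ∈ L ℓ, ENNReal.ofReal p / ENNReal.ofReal ‖V0 ℓ - V0 j‖)
    (hγ2 : ((k - 1 : ℕ) : ENNReal) < γ ⟨1, by omega⟩)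
    (hγ : ∀ ℓ : Fin k, 2 ≤ ℓ.val → ((k - ℓ.val + 1 : ℕ) : ENNReal) < γ ℓ) :
    ∀ᵐ ω ∂μ,
      Tendsto (fun t : ℕ => ‖v t ω‖) atTop (nhds 0) ∧
      ∃ xhat : Fin k → EuclideanSpace ℝ (Fin 3),
        Tendsto (fun t : ℕ => x t ω) atTop (nhds xhat) := by
  classical
  have hk0 : 0 < k := by omega
  have hk1R : (0:ℝ) < (k:ℝ) - 1 := by
    have h2 : (2:ℝ) ≤ (k:ℝ) := by exact_mod_cast hk
    linarith
  have hhk : h * ((k:ℝ) - 1) ≤ 1 := by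
    rw [le_div_iff₀ hk1R] at hh1
    exact hh1
  set ℱ : Filtration ℕ m0 := ⟨F, hFmono, hFle⟩ with hℱdef
  -- bird 0 has no leaders and zero velocity
  have hL0 : L ⟨0, hk0⟩ = ∅ := by
    rw [Finset.eq_empty_iff_forall_notMem]
    intro j hj
    have := hLlt _ j hj
    simp [Fin.lt_def] at this
  have hv0 : ∀ t ω, v t ω ⟨0, hk0⟩ = 0 := by
    intro t
    induction t with
    | zero => intro ω; rw [hV0]; exact hV0z
    | succ t ih =>
      intro ω
      rw [hvdyn t ω ⟨0, hk0⟩, hL0]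
      simp [ih ω]
  -- interaction weights
  set A : Fin k → ℕ → Ω → ℝ := fun i t ω => h * ∑ j ∈ L i, a t ω i j with hAdef
  have hcard : ∀ i : Fin k, ((L i).card : ℝ) ≤ (k:ℝ) - 1 := by
    intro i
    have hsub : L i ⊆ Finset.univ.erase i := by
      intro j hj
      exact Finset.mem_erase.2 ⟨ne_of_lt (hLlt i j hj), Finset.mem_univ j⟩
    have h1 : (L i).card ≤ k - 1 := by
      calc (L i).card ≤ (Finset.univ.erase i).card := Finset.card_le_card hsub
        _ = k - 1 := by
            rw [Finset.card_erase_of_mem (Finset.mem_univ i), Finset.card_univ, Fintype.card_fin]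
    have h2 : ((L i).card : ℝ) ≤ ((k - 1 : ℕ) : ℝ) := by exact_mod_cast h1
    have h3 : ((k - 1 : ℕ) : ℝ) = (k:ℝ) - 1 := by
      rw [Nat.cast_sub hk0]
      norm_num
    linarith
  have hA0 : ∀ (i : Fin k) t ω, 0 ≤ A i t ω := fun i t ω =>
    mul_nonneg hh0.le (Finset.sum_nonneg fun j hj => ha0 t ω i j hj)
  have hA1 : ∀ (i : Fin k) t ω, A i t ω ≤ 1 := by
    intro i t ω
    have h1 : ∑ j ∈ L i, a t ω i j ≤ ((L i).card : ℝ) := by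
      calc ∑ j ∈ L i, a t ω i j ≤ ∑ _j ∈ L i, (1:ℝ) :=
            Finset.sum_le_sum fun j hj => ha1 t ω i j hj
        _ = ((L i).card : ℝ) := by simp
    calc A i t ω ≤ h * ((L i).card : ℝ) := mul_le_mul_of_nonneg_left h1 hh0.le
      _ ≤ h * ((k:ℝ) - 1) := mul_le_mul_of_nonneg_left (hcard i) hh0.le
      _ ≤ 1 := hhk
  -- rearranged velocity dynamics
  have hvdyn' : ∀ t ω (i : Fin k), v (t+1) ω i
      = (1 - A i (t+1) ω) • v t ω i + ∑ j ∈ L i, (h * a (t+1) ω i j) • v t ω j := by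
    intro t ω i
    rw [hvdyn t ω i, hAdef]
    simp only [smul_sub, Finset.smul_sum, smul_smul, sub_smul, one_smul]
    rw [Finset.sum_sub_distrib, ← Finset.sum_smul, ← Finset.mul_sum]
    abel
  have hurec0 : ∀ t ω (i : Fin k), ‖v (t+1) ω i‖
      ≤ (1 - A i (t+1) ω) * ‖v t ω i‖ + ∑ j ∈ L i, (h * a (t+1) ω i j) * ‖v t ω j‖ := by
    intro t ω i
    rw [hvdyn' t ω i]
    calc ‖(1 - A i (t+1) ω) • v t ω i + ∑ j ∈ L i, (h * a (t+1) ω i j) • v t ω j‖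
        ≤ ‖(1 - A i (t+1) ω) • v t ω i‖ + ‖∑ j ∈ L i, (h * a (t+1) ω i j) • v t ω j‖ :=
          norm_add_le _ _
      _ ≤ (1 - A i (t+1) ω) * ‖v t ω i‖ + ∑ j ∈ L i, (h * a (t+1) ω i j) * ‖v t ω j‖ := by
          apply add_le_add
          · rw [norm_smul, Real.norm_eq_abs, abs_of_nonneg (by linarith [hA1 i (t+1) ω])]
          · calc ‖∑ j ∈ L i, (h * a (t+1) ω i j) • v t ω j‖
                ≤ ∑ j ∈ L i, ‖(h * a (t+1) ω i j) • v t ω j‖ := norm_sum_le _ _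
              _ ≤ ∑ j ∈ L i, (h * a (t+1) ω i j) * ‖v t ω j‖ := by
                  apply Finset.sum_le_sum
                  intro j hj
                  rw [norm_smul, Real.norm_eq_abs,
                    abs_of_nonneg (mul_nonneg hh0.le (ha0 (t+1) ω i j hj))]
  -- global velocity bound
  set m : ℝ := ∑ i : Fin k, ‖V0 i‖ with hmdef
  have hm0 : 0 ≤ m := Finset.sum_nonneg fun i _ => norm_nonneg _
  have hV0m : ∀ i : Fin k, ‖V0 i‖ ≤ m := fun i =>
    Finset.single_le_sum (fun j _ => norm_nonneg (V0 j)) (Finset.mem_univ i)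
  have hvm : ∀ t ω (i : Fin k), ‖v t ω i‖ ≤ m := by
    intro t
    induction t with
    | zero => intro ω i; rw [hV0]; exact hV0m i
    | succ t ih =>
      intro ω i
      calc ‖v (t+1) ω i‖
          ≤ (1 - A i (t+1) ω) * ‖v t ω i‖ + ∑ j ∈ L i, (h * a (t+1) ω i j) * ‖v t ω j‖ :=
            hurec0 t ω i
        _ ≤ (1 - A i (t+1) ω) * m + ∑ j ∈ L i, (h * a (t+1) ω i j) * m := by
            apply add_le_add
            · exact mul_le_mul_of_nonneg_left (ih ω i) (by linarith [hA1 i (t+1) ω])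
            · apply Finset.sum_le_sum
              intro j hj
              exact mul_le_mul_of_nonneg_left (ih ω j)
                (mul_nonneg hh0.le (ha0 (t+1) ω i j hj))
        _ = m := by
            rw [← Finset.sum_mul, ← Finset.mul_sum]
            have : A i (t+1) ω = h * ∑ j ∈ L i, a (t+1) ω i j := rfl
            rw [← this]
            ring
  -- simple recursion for the norms, with leader forcing
  have hurec : ∀ t ω (i : Fin k), ‖v (t+1) ω i‖
      ≤ (1 - A i (t+1) ω) * ‖v t ω i‖ + h * ∑ j ∈ L i, ‖v t ω j‖ := by
    intro t ω i
    refine (hurec0 t ω i).trans (add_le_add le_rfl ?_)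
    rw [Finset.mul_sum]
    apply Finset.sum_le_sum
    intro j hj
    apply mul_le_mul_of_nonneg_right _ (norm_nonneg _)
    calc h * a (t+1) ω i j ≤ h * 1 := mul_le_mul_of_nonneg_left (ha1 (t+1) ω i j hj) hh0.le
      _ = h := mul_one h
  -- positions
  have hxsum : ∀ t ω (i : Fin k), x t ω i = X0 i + ∑ s ∈ Finset.range t, h • v s ω i := by
    intro t
    induction t with
    | zero => intro ω i; rw [hX0]; simp
    | succ t ih =>
      intro ω i
      rw [hxdyn t ω i, ih ω i, Finset.sum_range_succ]
      abel
  have hD : ∀ t ω (i j : Fin k), ‖x t ω i - x t ω j‖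
      ≤ ‖X0 i - X0 j‖ + h * ∑ s ∈ Finset.range t, (‖v s ω i‖ + ‖v s ω j‖) := by
    intro t ω i j
    rw [hxsum t ω i, hxsum t ω j]
    have he : (X0 i + ∑ s ∈ Finset.range t, h • v s ω i) - (X0 j + ∑ s ∈ Finset.range t, h • v s ω j)
        = (X0 i - X0 j) + ∑ s ∈ Finset.range t, (h • v s ω i - h • v s ω j) := by
      rw [Finset.sum_sub_distrib]
      abel
    rw [he]
    calc ‖(X0 i - X0 j) + ∑ s ∈ Finset.range t, (h • v s ω i - h • v s ω j)‖
        ≤ ‖X0 i - X0 j‖ + ‖∑ s ∈ Finset.range t, (h • v s ω i - h • v s ω j)‖ := norm_add_le _ _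
      _ ≤ ‖X0 i - X0 j‖ + h * ∑ s ∈ Finset.range t, (‖v s ω i‖ + ‖v s ω j‖) := by
          apply add_le_add le_rfl
          calc ‖∑ s ∈ Finset.range t, (h • v s ω i - h • v s ω j)‖
              ≤ ∑ s ∈ Finset.range t, ‖h • v s ω i - h • v s ω j‖ := norm_sum_le _ _
            _ ≤ ∑ s ∈ Finset.range t, h * (‖v s ω i‖ + ‖v s ω j‖) := by
                apply Finset.sum_le_sum
                intro s _
                rw [← smul_sub, norm_smul, Real.norm_eq_abs, abs_of_nonneg hh0.le]
                exact mul_le_mul_of_nonneg_left (norm_sub_le _ _) hh0.le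
            _ = h * ∑ s ∈ Finset.range t, (‖v s ω i‖ + ‖v s ω j‖) := (Finset.mul_sum _ _ _).symm
  -- measurability helpers
  have humeas : ∀ t (i : Fin k), Measurable[F t] (fun ω => ‖v t ω i‖) := by
    intro t i
    letI : MeasurableSpace Ω := F t
    exact ((measurable_pi_apply i).comp (hvmeas t)).norm
  have hxdmeas : ∀ t (i j : Fin k), Measurable[F t] (fun ω => ‖x t ω i - x t ω j‖) := by
    intro t i j
    letI : MeasurableSpace Ω := F t
    exact (((measurable_pi_apply i).comp (hxmeas t)).sub
      ((measurable_pi_apply j).comp (hxmeas t))).norm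
  -- the stage machinery -------------------------------------------------
  set W : Fin k → ℕ → Ω → ℝ := fun i t ω => h * ∑ j ∈ L i, ‖v t ω j‖ with hWdef
  have hWmeas : ∀ (i : Fin k) t, Measurable[F t] (W i t) := by
    intro i t
    letI : MeasurableSpace Ω := F t
    exact (Finset.measurable_sum (L i) (fun j _ => by
      have := humeas t j
      exact this)).const_mul h
  set wseq : ℕ → ℕ → ℕ → ℝ := fun n κ t => (n:ℝ) / ((1:ℝ)+t)^(κ+2) with hwdef
  set cseq : ℕ → ℝ → ℕ → ℕ → ℝ :=
    fun κ σ R t => min (h*p / (1 + (R:ℝ) + h*σ*t)) ((κ:ℝ)/((κ:ℝ)+t+1)) with hcdef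
  have hcseq0 : ∀ (κ:ℕ) (σ:ℝ) (R:ℕ), 0 ≤ σ → ∀ t, 0 ≤ cseq κ σ R t := by
    intro κ σ R hσ t
    apply le_min
    · have hden : (0:ℝ) < 1 + (R:ℝ) + h*σ*t := by positivity
      positivity
    · positivity
  have hcseqcap : ∀ (κ:ℕ) σ (R:ℕ) t, cseq κ σ R t ≤ (κ:ℝ)/((κ:ℝ)+t+1) :=
    fun κ σ R t => min_le_right _ _
  have hcseqlt1 : ∀ (κ:ℕ) σ (R:ℕ) t, cseq κ σ R t < 1 := by
    intro κ σ R t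
    apply lt_of_le_of_lt (min_le_right _ _)
    rw [div_lt_one (by positivity)]
    linarith [Nat.cast_nonneg (α := ℝ) t]
  set Icond : Fin k → ℕ → ℕ → ℝ → ℕ → ℕ → Ω → Prop := fun i κ n σ R t ω =>
    ∀ s, s ≤ t → (W i s ω ≤ wseq n κ s ∧
      ∀ j ∈ L i, ‖x s ω i - x s ω j‖ ≤ (R:ℝ) + h*σ*s) with hIconddef
  set Iproc : Fin k → ℕ → ℕ → ℝ → ℕ → ℕ → Ω → ℝ := fun i κ n σ R t ω =>
    if Icond i κ n σ R t ω then 1 else 0 with hIdef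
  have hIone : ∀ i κ n σ R t ω, Icond i κ n σ R t ω → Iproc i κ n σ R t ω = 1 := by
    intro i κ n σ R t ω hc
    simp only [hIdef, if_pos hc]
  have hIof : ∀ i κ n σ R t ω, Iproc i κ n σ R t ω = 1 → Icond i κ n σ R t ω := by
    intro i κ n σ R t ω h1
    by_contra hc
    simp only [hIdef, if_neg hc] at h1
    norm_num at h1
  -- the main probabilistic estimate, from the supermartingale lemma
  have stage : ∀ (i : Fin k) (κ n R : ℕ) (σ : ℝ), 0 < i.val → 0 ≤ σ →
      ∀ᵐ ω ∂μ, (∀ t, Iproc i κ n σ R t ω = 1) →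
        ∃ C : ℝ, 0 ≤ C ∧ ∀ t, ‖v t ω i‖ ≤ C * ppX (cseq κ σ R) t := by
    intro i κ n R σ hi hσ
    obtain ⟨j0, hj0⟩ := hLne i hi
    have hc0' : ∀ t, 0 ≤ cseq κ σ R t := hcseq0 κ σ R hσ
    have hc1' : ∀ t, cseq κ σ R t < 1 := hcseqlt1 κ σ R
    have hppos : ∀ t, 0 < ppX (cseq κ σ R) t := FlockAux.pp_pos _ hc1'
    -- integrability of the interaction coefficients
    have hfint : ∀ t, ∀ j ∈ L i, Integrable (fun ω => a (t+1) ω i j) μ := by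
      intro t j hj
      refine ⟨((hameas (t+1) i j hj).mono (hFle (t+1)) le_rfl).aestronglyMeasurable, ?_⟩
      apply HasFiniteIntegral.of_bounded (C := 1)
      apply ae_of_all
      intro ω
      rw [Real.norm_eq_abs, abs_le]
      exact ⟨by linarith [ha0 (t+1) ω i j hj], ha1 (t+1) ω i j hj⟩
    -- conditional lower bound
    have hcond : ∀ t, ∀ᵐ ω ∂μ, Iproc i κ n σ R t ω = 1 →
        cseq κ σ R t ≤ (μ[A i (t+1) | ℱ t]) ω := by
      intro t
      have e1 : A i (t+1) = h • ∑ j ∈ L i, (fun ω => a (t+1) ω i j) := by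
        funext ω
        simp [hAdef, Finset.sum_apply]
      have e2 : μ[A i (t+1)|ℱ t] =ᵐ[μ] h • μ[∑ j ∈ L i, (fun ω => a (t+1) ω i j)|ℱ t] := by
        rw [e1]
        exact condExp_smul (m := ℱ t) h _
      have e3 : μ[∑ j ∈ L i, (fun ω => a (t+1) ω i j)|ℱ t]
          =ᵐ[μ] ∑ j ∈ L i, μ[fun ω => a (t+1) ω i j|ℱ t] :=
        condExp_finset_sum (hfint t) _
      have hKall : ∀ᵐ ω ∂μ, ∀ j ∈ L i,
          p/(1+‖x t ω i - x t ω j‖) ≤ (μ[fun ω' => a (t+1) ω' i j|F t]) ω :=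
        (ae_ball_iff ((L i).countable_toSet)).2 (fun j hj => hK t i j hj)
      filter_upwards [e2, e3, hKall] with ω h2 h3 hKω hI1
      have hIc := hIof i κ n σ R t ω hI1
      have hDb : ‖x t ω i - x t ω j0‖ ≤ (R:ℝ) + h*σ*t := (hIc t le_rfl).2 j0 hj0
      have hterm : ∀ j ∈ L i, 0 ≤ (μ[fun ω' => a (t+1) ω' i j|F t]) ω := by
        intro j hj
        refine le_trans ?_ (hKω j hj)
        positivity
      have hsum_lb : p/(1+‖x t ω i - x t ω j0‖)
          ≤ ∑ j ∈ L i, (μ[fun ω' => a (t+1) ω' i j|F t]) ω :=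
        le_trans (hKω j0 hj0) (Finset.single_le_sum hterm hj0)
      have hEω : (μ[A i (t+1)|ℱ t]) ω
          = h * ∑ j ∈ L i, (μ[fun ω' => a (t+1) ω' i j|F t]) ω := by
        rw [h2, Pi.smul_apply, h3, Finset.sum_apply, smul_eq_mul]
      rw [hEω]
      have hd1 : (0:ℝ) < 1 + ‖x t ω i - x t ω j0‖ := by positivity
      have hd2 : (0:ℝ) < 1 + (R:ℝ) + h*σ*t := by positivity
      calc cseq κ σ R t ≤ h*p/(1 + (R:ℝ) + h*σ*t) := min_le_left _ _
        _ ≤ h*p/(1+‖x t ω i - x t ω j0‖) := by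
            apply div_le_div_of_nonneg_left (by positivity) hd1 (by linarith)
        _ = h * (p/(1+‖x t ω i - x t ω j0‖)) := by ring
        _ ≤ h * ∑ j ∈ L i, (μ[fun ω' => a (t+1) ω' i j|F t]) ω :=
            mul_le_mul_of_nonneg_left hsum_lb hh0.le
    -- measurability of the indicator process
    have hImeas : ∀ t, Measurable[F t] (Iproc i κ n σ R t) := by
      intro t
      letI : MeasurableSpace Ω := F t
      have hset : MeasurableSet {ω | Icond i κ n σ R t ω} := by
        have e : {ω | Icond i κ n σ R t ω}
            = ⋂ s, ⋂ (_ : s ≤ t), ({ω | W i s ω ≤ wseq n κ s}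
                ∩ ⋂ j, ⋂ (_ : j ∈ L i), {ω | ‖x s ω i - x s ω j‖ ≤ (R:ℝ) + h*σ*s}) := by
          ext ω
          simp only [hIconddef, Set.mem_setOf_eq, Set.mem_iInter, Set.mem_inter_iff]
        rw [e]
        apply MeasurableSet.iInter; intro s
        apply MeasurableSet.iInter; intro hs
        apply MeasurableSet.inter
        · exact measurableSet_le ((hWmeas i s).mono (hFmono hs) le_rfl) measurable_const
        · apply MeasurableSet.iInter; intro j
          apply MeasurableSet.iInter; intro hj
          exact measurableSet_le ((hxdmeas s i j).mono (hFmono hs) le_rfl) measurable_const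
      exact Measurable.ite hset measurable_const measurable_const
    -- summability of the forcing term
    have hsum : Summable (fun s => wseq n κ s / ppX (cseq κ σ R) (s+1)) := by
      apply Summable.of_nonneg_of_le
        (fun s => div_nonneg (by positivity) (hppos (s+1)).le)
        (fun s => ?_) (FlockAux.summable_inv_sq.mul_left ((n:ℝ) * 2^κ))
      have hπlow := FlockAux.pp_lower (cseq κ σ R) κ hc0' hc1'
        (fun t => hcseqcap κ σ R t) (s+1)
      have hcast : ((1:ℝ) + ((s+1:ℕ):ℝ)) = 2 + s := by push_cast; ring
      rw [hcast] at hπlow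
      have h1 : 1 / ppX (cseq κ σ R) (s+1) ≤ ((2:ℝ)+s)^κ := by
        rw [div_le_iff₀ (hppos (s+1))]
        calc (1:ℝ) ≤ ppX (cseq κ σ R) (s+1) * (2+(s:ℝ))^κ := hπlow
          _ = (2+(s:ℝ))^κ * ppX (cseq κ σ R) (s+1) := mul_comm _ _
      calc wseq n κ s / ppX (cseq κ σ R) (s+1)
          = wseq n κ s * (1 / ppX (cseq κ σ R) (s+1)) := div_eq_mul_one_div _ _
        _ ≤ wseq n κ s * ((2:ℝ)+s)^κ := by
            apply mul_le_mul_of_nonneg_left h1 (by positivity)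
        _ ≤ (n:ℝ) * 2^κ * (1/((1:ℝ)+s)^2) := by
            rw [hwdef]
            simp only []
            rw [div_mul_eq_mul_div, div_le_iff₀ (by positivity), mul_one_div,
              div_mul_eq_mul_div, le_div_iff₀ (by positivity)]
            have hp1' : ((2:ℝ)+s)^κ ≤ 2^κ * (1+(s:ℝ))^κ := by
              rw [← mul_pow]
              apply pow_le_pow_left₀ (by positivity)
              linarith [Nat.cast_nonneg (α := ℝ) s]
            have hsplit : ((1:ℝ)+s)^(κ+2) = (1+(s:ℝ))^κ * (1+(s:ℝ))^2 := by
              rw [pow_add]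
            calc (n:ℝ) * (2+(s:ℝ))^κ * (1+(s:ℝ))^2
                ≤ (n:ℝ) * (2^κ * (1+(s:ℝ))^κ) * (1+(s:ℝ))^2 := by
                  apply mul_le_mul_of_nonneg_right _ (by positivity)
                  exact mul_le_mul_of_nonneg_left hp1' (by positivity)
              _ = (n:ℝ) * 2^κ * (1+(s:ℝ))^(κ+2) := by rw [hsplit]; ring
    -- apply the abstract lemma
    have hcore := FlockCore.core (μ := μ) ℱ
      (fun t ω => ‖v t ω i‖) (W i) (Iproc i κ n σ R) (fun t => A i t)
      (cseq κ σ R) (wseq n κ) m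
      (fun t => humeas t i) (fun t ω => norm_nonneg _) (fun t ω => hvm t ω i)
      (fun t => by
        letI : MeasurableSpace Ω := F (t+1)
        exact (Finset.measurable_sum (L i) (fun j hj => hameas (t+1) i j hj)).const_mul h)
      (fun t ω => hA0 i (t+1) ω) (fun t ω => hA1 i (t+1) ω)
      (fun t ω => mul_nonneg hh0.le (Finset.sum_nonneg fun j _ => norm_nonneg _))
      hImeas
      (fun t ω => by
        by_cases hc : Icond i κ n σ R t ω
        · right; simp only [hIdef, if_pos hc]
        · left; simp only [hIdef, if_neg hc])
      (fun t ω => by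
        by_cases hc : Icond i κ n σ R (t+1) ω
        · have hc' : Icond i κ n σ R t ω := fun s hs => hc s (le_trans hs (Nat.le_succ t))
          simp only [hIdef, if_pos hc, if_pos hc']
          exact le_refl _
        · simp only [hIdef, if_neg hc]
          by_cases hc2 : Icond i κ n σ R t ω
          · simp only [if_pos hc2]; norm_num
          · simp only [if_neg hc2]; exact le_refl _)
      (fun t ω h1 => ((hIof i κ n σ R t ω h1) t le_rfl).1)
      (fun t => by positivity)
      (fun t ω => hurec t ω i)
      hc0' hc1' hsum hcond
    filter_upwards [hcore] with ω hω hIall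
    obtain ⟨C, hC⟩ := hω hIall
    refine ⟨max C 0, le_max_right _ _, fun t => ?_⟩
    exact (hC t).trans (mul_le_mul_of_nonneg_right (le_max_left _ _) (hppos t).le)
  -- per-bird polynomial decay --------------------------------------------
  have hκ3 : ∀ ι, ι < k → 3 ≤ κfun k ι := by
    intro ι hι; unfold κfun; omega
  have hκmono : ∀ jv ι, jv < ι → ι < k → κfun k ι + 2 ≤ κfun k jv := by
    intro jv ι h1 h2; unfold κfun; omega
  have main : ∀ ι : ℕ, ∀ i : Fin k, i.val = ι →
      ∀ᵐ ω ∂μ, ∃ C : ℝ, 0 ≤ C ∧ ∀ t : ℕ, ‖v t ω i‖ ≤ C / ((1:ℝ)+t)^(κfun k ι) := by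
    intro ι
    induction ι using Nat.strong_induction_on with
    | _ ι IH =>
    intro i hival
    by_cases hι0 : ι = 0
    · apply ae_of_all
      intro ω
      refine ⟨0, le_refl 0, fun t => ?_⟩
      have hie : i = ⟨0, hk0⟩ := by apply Fin.ext; rw [hival, hι0]
      rw [hie, hv0 t ω]
      simp
    · have hi0 : 0 < i.val := by omega
      have hκpos : (0:ℝ) < (κfun k ι : ℝ) := by
        have h3 := hκ3 ι (hival ▸ i.isLt)
        exact_mod_cast (by omega : 0 < κfun k ι)
      -- decay of all leaders, with a single random constant
      have hlead1 : ∀ᵐ ω ∂μ, ∃ Cl : ℝ, 0 ≤ Cl ∧ ∀ t, ∀ j ∈ L i,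
          ‖v t ω j‖ ≤ Cl / ((1:ℝ)+t)^(κfun k ι + 2) := by
        have hball : ∀ᵐ ω ∂μ, ∀ j ∈ L i, ∃ Cj : ℝ, 0 ≤ Cj ∧ ∀ t,
            ‖v t ω j‖ ≤ Cj / ((1:ℝ)+t)^(κfun k ι + 2) := by
          refine (ae_ball_iff ((L i).countable_toSet)).2 fun j hj => ?_
          have hjlt : j.val < ι := by rw [← hival]; exact hLlt i j hj
          filter_upwards [IH j.val hjlt j rfl] with ω hCj
          obtain ⟨Cj, hCj0, hCjb⟩ := hCj
          refine ⟨Cj, hCj0, fun t => (hCjb t).trans ?_⟩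
          apply div_le_div_of_nonneg_left hCj0 (by positivity)
          apply pow_le_pow_right₀ (by linarith [Nat.cast_nonneg (α := ℝ) t])
          exact hκmono j.val ι hjlt (hival ▸ i.isLt)
        filter_upwards [hball] with ω hω
        choose Cf hC0 hCb using hω
        refine ⟨∑ j ∈ (L i).attach, Cf j.1 j.2,
          Finset.sum_nonneg (fun j _ => hC0 j.1 j.2), ?_⟩
        intro t j hj
        refine (hCb j hj t).trans ?_
        apply (div_le_div_iff_of_pos_right (by positivity)).2
        exact Finset.single_le_sum (f := fun jj : {y // y ∈ L i} => Cf jj.1 jj.2)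
          (fun jj _ => hC0 jj.1 jj.2) (Finset.mem_attach _ ⟨j, hj⟩)
      set Xb : ℝ := ∑ j ∈ L i, ‖X0 i - X0 j‖ with hXbdef
      have hXb0 : 0 ≤ Xb := Finset.sum_nonneg fun j _ => norm_nonneg _
      have hXbj : ∀ j ∈ L i, ‖X0 i - X0 j‖ ≤ Xb := fun j hj =>
        Finset.single_le_sum (f := fun j' => ‖X0 i - X0 j'‖) (fun j' _ => norm_nonneg _) hj
      have hk1 : (1:ℝ) ≤ (k:ℝ) := Nat.one_le_cast.mpr hk0
      -- common bound : indicator conditions for the W-part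
      have hWcond : ∀ ω, (∃ Cl : ℝ, 0 ≤ Cl ∧ ∀ t, ∀ j ∈ L i,
          ‖v t ω j‖ ≤ Cl / ((1:ℝ)+t)^(κfun k ι + 2)) →
          ∀ Cl : ℝ, 0 ≤ Cl → (∀ t, ∀ j ∈ L i, ‖v t ω j‖ ≤ Cl / ((1:ℝ)+t)^(κfun k ι + 2)) →
          ∀ s : ℕ, W i s ω ≤ wseq (⌈h * k * Cl⌉₊) (κfun k ι) s := by
        intro ω _ Cl hCl0 hClb s
        have hcard' : ((L i).card : ℝ) ≤ (k:ℝ) := by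
          have := hcard i; linarith
        calc W i s ω = h * ∑ j ∈ L i, ‖v s ω j‖ := rfl
          _ ≤ h * ∑ _j ∈ L i, (Cl / ((1:ℝ)+s)^(κfun k ι + 2)) := by
              apply mul_le_mul_of_nonneg_left _ hh0.le
              exact Finset.sum_le_sum (fun j hj => hClb s j hj)
          _ = h * ((L i).card * (Cl / ((1:ℝ)+s)^(κfun k ι + 2))) := by
              rw [Finset.sum_const, nsmul_eq_mul]
          _ ≤ (⌈h * k * Cl⌉₊ : ℝ) / ((1:ℝ)+s)^(κfun k ι + 2) := by
              rw [mul_div_assoc', mul_div_assoc']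
              apply (div_le_div_iff_of_pos_right (by positivity)).2
              calc h * ((L i).card * Cl) ≤ h * ((k:ℝ) * Cl) := by
                    apply mul_le_mul_of_nonneg_left _ hh0.le
                    exact mul_le_mul_of_nonneg_right hcard' hCl0
                _ = h * k * Cl := by ring
                _ ≤ (⌈h * k * Cl⌉₊ : ℝ) := Nat.le_ceil _
      -- partial sums of the leaders' velocities
      have hvjsum : ∀ ω Cl, 0 ≤ Cl → (∀ t, ∀ j ∈ L i, ‖v t ω j‖ ≤ Cl / ((1:ℝ)+t)^(κfun k ι + 2)) →
          ∀ s : ℕ, ∀ j ∈ L i, ∑ u ∈ Finset.range s, ‖v u ω j‖ ≤ 2*Cl := by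
        intro ω Cl hCl0 hClb s j hj
        calc ∑ u ∈ Finset.range s, ‖v u ω j‖
            ≤ ∑ u ∈ Finset.range s, Cl * (1/((1:ℝ)+u)^2) := by
              apply Finset.sum_le_sum
              intro u _
              refine (hClb u j hj).trans ?_
              rw [mul_one_div]
              apply div_le_div_of_nonneg_left hCl0 (by positivity)
              apply pow_le_pow_right₀ (by linarith [Nat.cast_nonneg (α := ℝ) u])
              omega
          _ = Cl * ∑ u ∈ Finset.range s, (1/((1:ℝ)+u)^2) := (Finset.mul_sum _ _ _).symm
          _ ≤ Cl * 2 := mul_le_mul_of_nonneg_left (FlockAux.sum_inv_sq_le s) hCl0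
          _ = 2*Cl := by ring
      -- stage 1 : velocities tend to zero
      have hstage1all : ∀ᵐ ω ∂μ, ∀ n R : ℕ, (∀ t, Iproc i (κfun k ι) n m R t ω = 1) →
          ∃ C, 0 ≤ C ∧ ∀ t, ‖v t ω i‖ ≤ C * ppX (cseq (κfun k ι) m R) t :=
        ae_all_iff.2 fun n => ae_all_iff.2 fun R => stage i (κfun k ι) n R m hi0 hm0
      have htend0 : ∀ᵐ ω ∂μ, Tendsto (fun t => ‖v t ω i‖) atTop (nhds 0) := by
        filter_upwards [hlead1, hstage1all] with ω hCl hst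
        obtain ⟨Cl, hCl0, hClb⟩ := hCl
        set n : ℕ := ⌈h * k * Cl⌉₊ with hn
        set R : ℕ := ⌈Xb + 2*h*Cl⌉₊ with hR
        have hIall : ∀ t, Iproc i (κfun k ι) n m R t ω = 1 := by
          intro t
          apply hIone
          intro s hs
          constructor
          · exact hWcond ω ⟨Cl, hCl0, hClb⟩ Cl hCl0 hClb s
          · intro j hj
            refine (hD s ω i j).trans ?_
            have hsum1 : ∑ u ∈ Finset.range s, (‖v u ω i‖ + ‖v u ω j‖)
                ≤ m * s + 2*Cl := by
              rw [Finset.sum_add_distrib]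
              have h1 : ∑ u ∈ Finset.range s, ‖v u ω i‖ ≤ m * s := by
                calc ∑ u ∈ Finset.range s, ‖v u ω i‖ ≤ ∑ _u ∈ Finset.range s, m :=
                      Finset.sum_le_sum (fun u _ => hvm u ω i)
                  _ = m * s := by rw [Finset.sum_const, nsmul_eq_mul, Finset.card_range]; ring
              linarith [hvjsum ω Cl hCl0 hClb s j hj]
            calc ‖X0 i - X0 j‖ + h * ∑ u ∈ Finset.range s, (‖v u ω i‖ + ‖v u ω j‖)
                ≤ Xb + h * (m * s + 2*Cl) := by
                  apply add_le_add (hXbj j hj)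
                  exact mul_le_mul_of_nonneg_left hsum1 hh0.le
              _ = (Xb + 2*h*Cl) + h*m*s := by ring
              _ ≤ (R:ℝ) + h*m*s := by
                  have := Nat.le_ceil (Xb + 2*h*Cl)
                  rw [hR]; linarith
        obtain ⟨C, hC0, hCb⟩ := hst n R hIall
        have hA : (0:ℝ) < min (h*p/(1 + (R:ℝ) + h*m)) ((κfun k ι:ℝ)/((κfun k ι:ℝ)+1)) := by
          apply lt_min
          · have : (0:ℝ) < 1 + (R:ℝ) + h*m := by positivity
            positivity
          · positivity
        have hlow : ∀ t : ℕ, (min (h*p/(1 + (R:ℝ) + h*m)) ((κfun k ι:ℝ)/((κfun k ι:ℝ)+1)))/(1+(t:ℝ))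
            ≤ cseq (κfun k ι) m R t := by
          intro t
          have ht0 : (0:ℝ) ≤ (t:ℝ) := Nat.cast_nonneg t
          apply le_min
          · calc (min (h*p/(1 + (R:ℝ) + h*m)) ((κfun k ι:ℝ)/((κfun k ι:ℝ)+1)))/(1+(t:ℝ))
                ≤ (h*p/(1 + (R:ℝ) + h*m))/(1+(t:ℝ)) := by
                  apply (div_le_div_iff_of_pos_right (by positivity)).2 (min_le_left _ _)
              _ = h*p/((1 + (R:ℝ) + h*m)*(1+(t:ℝ))) := by rw [div_div]
              _ ≤ h*p/(1 + (R:ℝ) + h*m*t) := by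
                  apply div_le_div_of_nonneg_left (by positivity) (by positivity)
                  have hR0 : (0:ℝ) ≤ (R:ℝ) := Nat.cast_nonneg R
                  nlinarith [mul_nonneg (mul_nonneg hh0.le hm0) ht0]
          · calc (min (h*p/(1 + (R:ℝ) + h*m)) ((κfun k ι:ℝ)/((κfun k ι:ℝ)+1)))/(1+(t:ℝ))
                ≤ ((κfun k ι:ℝ)/((κfun k ι:ℝ)+1))/(1+(t:ℝ)) := by
                  apply (div_le_div_iff_of_pos_right (by positivity)).2 (min_le_right _ _)
              _ = (κfun k ι:ℝ)/(((κfun k ι:ℝ)+1)*(1+(t:ℝ))) := by rw [div_div]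
              _ ≤ (κfun k ι:ℝ)/((κfun k ι:ℝ)+t+1) := by
                  apply div_le_div_of_nonneg_left hκpos.le (by positivity)
                  nlinarith
        have hppz := FlockAux.pp_tendsto_zero (cseq (κfun k ι) m R) _ hA
          (hcseq0 (κfun k ι) m R hm0) (hcseqlt1 (κfun k ι) m R) hlow
        apply squeeze_zero (fun t => norm_nonneg _) hCb
        have := hppz.const_mul C
        simpa using this
      -- stage 2 : polynomial decay
      set σ2 : ℝ := p/(2*(κfun k ι:ℝ)) with hσ2def
      have hσ2pos : 0 < σ2 := by rw [hσ2def]; positivity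
      have hstage2all : ∀ᵐ ω ∂μ, ∀ n R : ℕ, (∀ t, Iproc i (κfun k ι) n σ2 R t ω = 1) →
          ∃ C, 0 ≤ C ∧ ∀ t, ‖v t ω i‖ ≤ C * ppX (cseq (κfun k ι) σ2 R) t :=
        ae_all_iff.2 fun n => ae_all_iff.2 fun R => stage i (κfun k ι) n R σ2 hi0 hσ2pos.le
      filter_upwards [hlead1, hstage2all, htend0] with ω hCl hst htend
      obtain ⟨Cl, hCl0, hClb⟩ := hCl
      obtain ⟨N, hN⟩ := eventually_atTop.1 (htend.eventually_le_const hσ2pos)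
      set n : ℕ := ⌈h * k * Cl⌉₊ with hn
      set R : ℕ := ⌈Xb + 2*h*Cl + h*m*N⌉₊ with hR
      have hIall : ∀ t, Iproc i (κfun k ι) n σ2 R t ω = 1 := by
        intro t
        apply hIone
        intro s hs
        constructor
        · exact hWcond ω ⟨Cl, hCl0, hClb⟩ Cl hCl0 hClb s
        · intro j hj
          refine (hD s ω i j).trans ?_
          have h1 : ∑ u ∈ Finset.range s, ‖v u ω i‖ ≤ m*N + σ2*s := by
            calc ∑ u ∈ Finset.range s, ‖v u ω i‖
                ≤ ∑ u ∈ Finset.range s, ((if u < N then m else 0) + σ2) := by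
                  apply Finset.sum_le_sum
                  intro u _
                  by_cases hu : u < N
                  · rw [if_pos hu]; linarith [hvm u ω i, hσ2pos]
                  · rw [if_neg hu]; rw [zero_add]; exact hN u (by omega)
              _ = (∑ u ∈ Finset.range s, (if u < N then m else 0)) + σ2*s := by
                  rw [Finset.sum_add_distrib, Finset.sum_const, nsmul_eq_mul,
                    Finset.card_range]
                  ring
              _ ≤ m*N + σ2*s := by
                  have h2 : ∑ u ∈ Finset.range s, (if u < N then m else 0)
                      ≤ ∑ _u ∈ Finset.range N, m := by
                    rw [← Finset.sum_filter]
                    apply Finset.sum_le_sum_of_subset_of_nonneg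
                    · intro u hu
                      simp only [Finset.mem_filter, Finset.mem_range] at hu ⊢
                      exact hu.2
                    · intro u _ _
                      exact hm0
                  have h3 : ∑ _u ∈ Finset.range N, m = m*N := by
                    rw [Finset.sum_const, nsmul_eq_mul, Finset.card_range]; ring
                  linarith
          calc ‖X0 i - X0 j‖ + h * ∑ u ∈ Finset.range s, (‖v u ω i‖ + ‖v u ω j‖)
              ≤ Xb + h * ((m*N + σ2*s) + 2*Cl) := by
                apply add_le_add (hXbj j hj)
                apply mul_le_mul_of_nonneg_left _ hh0.le
                rw [Finset.sum_add_distrib]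
                linarith [hvjsum ω Cl hCl0 hClb s j hj, h1]
            _ = (Xb + 2*h*Cl + h*m*N) + h*σ2*s := by ring
            _ ≤ (R:ℝ) + h*σ2*s := by
                have := Nat.le_ceil (Xb + 2*h*Cl + h*m*(N:ℝ))
                rw [hR]; linarith
      obtain ⟨C, hC0, hCb⟩ := hst n R hIall
      set t₁ : ℕ := ⌈2*((κfun k ι):ℝ)*(1+(R:ℝ))/(h*p)⌉₊ with ht₁def
      have hcap : ∀ s, t₁ ≤ s →
          ((κfun k ι):ℝ)/(((κfun k ι):ℝ)+s+1) ≤ cseq (κfun k ι) σ2 R s := by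
        intro s hs1
        apply le_min _ (le_refl _)
        rw [div_le_div_iff₀ (by positivity) (by positivity)]
        have hs' : 2*((κfun k ι):ℝ)*(1+(R:ℝ))/(h*p) ≤ (s:ℝ) := by
          calc 2*((κfun k ι):ℝ)*(1+(R:ℝ))/(h*p) ≤ (t₁:ℝ) := Nat.le_ceil _
            _ ≤ (s:ℝ) := Nat.cast_le.2 hs1
        have h2' : 2*((κfun k ι):ℝ)*(1+(R:ℝ)) ≤ h*p*s := by
          rw [div_le_iff₀ (by positivity)] at hs'
          linarith
        have hσ2e : ((κfun k ι):ℝ)*(h*σ2*(s:ℝ)) = h*p*(s:ℝ)/2 := by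
          rw [hσ2def]
          field_simp
        have hR0 : (0:ℝ) ≤ (R:ℝ) := Nat.cast_nonneg R
        have hs0 : (0:ℝ) ≤ (s:ℝ) := Nat.cast_nonneg s
        have e3 : (0:ℝ) ≤ h*p*((κfun k ι):ℝ) := by positivity
        have e4 : (0:ℝ) < h*p := by positivity
        nlinarith [hσ2e, h2']
      have hupper := FlockAux.pp_upper (cseq (κfun k ι) σ2 R) (κfun k ι) t₁
        (hcseq0 (κfun k ι) σ2 R hσ2pos.le) (hcseqlt1 (κfun k ι) σ2 R) hcap
      refine ⟨max (C * (((t₁:ℝ)+((κfun k ι):ℝ)+1))^(κfun k ι))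
        (m * ((1:ℝ)+(t₁:ℝ))^(κfun k ι)), ?_, fun t => ?_⟩
      · apply le_max_iff.2
        left
        positivity
      · by_cases hts : t₁ ≤ t
        · calc ‖v t ω i‖ ≤ C * ppX (cseq (κfun k ι) σ2 R) t := hCb t
            _ ≤ C * (((t₁:ℝ)+((κfun k ι):ℝ)+1)^(κfun k ι)
                  / ((t:ℝ)+((κfun k ι):ℝ)+1)^(κfun k ι)) :=
                mul_le_mul_of_nonneg_left (hupper t hts) hC0
            _ = (C * ((t₁:ℝ)+((κfun k ι):ℝ)+1)^(κfun k ι))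
                  / ((t:ℝ)+((κfun k ι):ℝ)+1)^(κfun k ι) := by ring
            _ ≤ (C * ((t₁:ℝ)+((κfun k ι):ℝ)+1)^(κfun k ι)) / ((1:ℝ)+(t:ℝ))^(κfun k ι) := by
                apply div_le_div_of_nonneg_left (by positivity) (by positivity)
                apply pow_le_pow_left₀ (by positivity)
                linarith [hκpos]
            _ ≤ _ := by
                apply (div_le_div_iff_of_pos_right (by positivity)).2
                exact le_max_left _ _
        · push_neg at hts
          calc ‖v t ω i‖ ≤ m := hvm t ω i
            _ ≤ (m * ((1:ℝ)+(t₁:ℝ))^(κfun k ι)) / ((1:ℝ)+(t:ℝ))^(κfun k ι) := by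
                rw [le_div_iff₀ (by positivity)]
                apply mul_le_mul_of_nonneg_left _ hm0
                apply pow_le_pow_left₀ (by positivity)
                have hcast : (t:ℝ) ≤ (t₁:ℝ) := Nat.cast_le.2 (by omega)
                linarith
            _ ≤ _ := by
                apply (div_le_div_iff_of_pos_right (by positivity)).2
                exact le_max_right _ _
  -- conclusion ------------------------------------------------------------
  have hallv : ∀ᵐ ω ∂μ, ∀ i : Fin k, ∃ C : ℝ, 0 ≤ C ∧ ∀ t : ℕ,
      ‖v t ω i‖ ≤ C / ((1:ℝ)+t)^(κfun k i.val) :=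
    ae_all_iff.2 fun i => main i.val i rfl
  filter_upwards [hallv] with ω hω
  have hbound : ∃ CC : ℝ, 0 ≤ CC ∧ ∀ t : ℕ, ∀ i : Fin k,
      ‖v t ω i‖ ≤ CC / ((1:ℝ)+t)^2 := by
    choose Cf hCf0 hCfb using hω
    refine ⟨∑ i, Cf i, Finset.sum_nonneg fun i _ => hCf0 i, fun t i => ?_⟩
    calc ‖v t ω i‖ ≤ Cf i / ((1:ℝ)+t)^(κfun k i.val) := hCfb i t
      _ ≤ Cf i / ((1:ℝ)+t)^2 := by
          apply div_le_div_of_nonneg_left (hCf0 i) (by positivity)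
          apply pow_le_pow_right₀ (by linarith [Nat.cast_nonneg (α := ℝ) t])
          have := i.isLt
          unfold κfun
          omega
      _ ≤ (∑ i', Cf i') / ((1:ℝ)+t)^2 := by
          apply (div_le_div_iff_of_pos_right (by positivity)).2
          exact Finset.single_le_sum (fun i' _ => hCf0 i') (Finset.mem_univ i)
  obtain ⟨CC, hCC0, hCCb⟩ := hbound
  constructor
  · have hle : ∀ t : ℕ, ‖v t ω‖ ≤ CC / ((1:ℝ)+t)^2 := by
      intro t
      apply (pi_norm_le_iff_of_nonneg (by positivity)).2
      intro i
      exact hCCb t i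
    apply squeeze_zero (fun t => norm_nonneg _) hle
    have hb1 : Tendsto (fun t : ℕ => (1:ℝ)+(t:ℝ)) atTop atTop :=
      tendsto_atTop_add_const_left _ 1 tendsto_natCast_atTop_atTop
    have h2 : Tendsto (fun t : ℕ => ((1:ℝ)+(t:ℝ))^2) atTop atTop := by
      apply tendsto_atTop_mono (fun t => ?_) hb1
      apply le_self_pow₀ _ two_ne_zero
      linarith [Nat.cast_nonneg (α := ℝ) t]
    exact Tendsto.div_atTop tendsto_const_nhds h2
  · refine ⟨fun i => X0 i + ∑' s : ℕ, h • v s ω i, ?_⟩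
    rw [tendsto_pi_nhds]
    intro i
    have hsummable : Summable (fun s : ℕ => h • v s ω i) := by
      apply Summable.of_norm
      apply Summable.of_nonneg_of_le (fun s => norm_nonneg _) (fun s => ?_)
        ((FlockAux.summable_inv_sq).mul_left (h * CC))
      rw [norm_smul, Real.norm_eq_abs, abs_of_nonneg hh0.le]
      calc h * ‖v s ω i‖ ≤ h * (CC/((1:ℝ)+s)^2) :=
            mul_le_mul_of_nonneg_left (hCCb s i) hh0.le
        _ = h * CC * (1/((1:ℝ)+s)^2) := by ring
    have hts := hsummable.hasSum.tendsto_sum_nat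
    have hfin : Tendsto (fun t => X0 i + ∑ s ∈ Finset.range t, h • v s ω i)
        atTop (nhds (X0 i + ∑' s : ℕ, h • v s ω i)) :=
      (tendsto_const_nhds (x := X0 i)).add hts
    exact hfin.congr (fun t => (hxsum t ω i).symm)
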